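/- Let d ≥ 2 be an even integer and Θ = (X₁,X₂) a d-small symbol with defining intervals such that w_ud(Θ) = ×^α ∧^w ∨^h ∘^β for some α, w, h, β ≥ 0 (all ×'s first, then all ∧'s, then all ∨'s, then all ∘'s). Let Ψ = (Y₁,Y₂) be a d-small symbol with the same defining intervals as Θ (the same I₁ and I₂, attached to the same rows) such that w_ud(Ψ) ≠ w_ud(Θ) and w_ud(Ψ) is obtained from w_ud(Θ) by permuting the letters ∧ and ∨ among the positions carrying ∧ or ∨, leaving every × and ∘ in place. Then max(Y₁ ∪ Y₂) > max(X₁ ∪ X₂). -/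

import Mathlib

open scoped Classical

/-- A β-set: a set of integers containing all sufficiently small integers
and no sufficiently large ones. -/
def IsBetaSet (X : Set ℤ) : Prop :=
  (∃ c : ℤ, ∀ z : ℤ, z < c → z ∈ X) ∧ (∃ C : ℤ, ∀ z : ℤ, C ≤ z → z ∉ X)

/-- `topB X = max X`. -/
noncomputable def topB (X : Set ℤ) : ℤ := sSup X

/-- `botB X = max {z | every integer < z lies in X}`. -/
noncomputable def botB (X : Set ℤ) : ℤ := sSup {z : ℤ | ∀ w : ℤ, w < z → w ∈ X}

/-- The charge `s(X)` of a β-set `X`, computed with the cutoff `c = botB X`. -/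
noncomputable def chargeB (X : Set ℤ) : ℤ :=
  ((X ∩ Set.Ici (botB X)).ncard : ℤ) + botB X - 1

/-- `elemSeq X j` is the `(j+1)`-st largest element of the β-set `X`. -/
noncomputable def elemSeq (X : Set ℤ) : ℕ → ℤ
  | 0 => sSup X
  | n + 1 => sSup (X ∩ Set.Iio (elemSeq X n))

/-- The partition `λ(X)` of a β-set `X`, `0`-indexed: `partB X j = λ_{j+1}`,
recovered from `x_j = s(X) + λ_j - j + 1` where `x_j` is the `j`-th largest element. -/
noncomputable def partB (X : Set ℤ) (j : ℕ) : ℕ :=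
  (elemSeq X j - chargeB X + j).toNat

/-- The size `|λ(X)|` of the partition of a β-set `X`. -/
noncomputable def sizeB (X : Set ℤ) : ℕ := ∑ᶠ j : ℕ, partB X j

/-- A partition, encoded as a weakly decreasing eventually zero function (0-indexed). -/
def IsPartition (μ : ℕ → ℕ) : Prop :=
  (∀ j, μ (j + 1) ≤ μ j) ∧ ∃ N, ∀ j, N ≤ j → μ j = 0

/-- The β-set `{s + λ_j - j + 1 : j ≥ 1}` of the partition `μ` with charge `s`. -/
def betaOf (μ : ℕ → ℕ) (s : ℤ) : Set ℤ :=
  {x : ℤ | ∃ j : ℕ, x = s + (μ j : ℤ) - (j : ℤ)}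

/-- The symbol `Θ = (X₁, X₂)` is `d`-small with defining intervals
`I₁ = [a₁,b₁]` and `I₂ = [a₂,b₂]`. -/
structure IsDSmallWith (d : ℤ) (X₁ X₂ : Set ℤ) (a₁ b₁ a₂ b₂ : ℤ) : Prop where
  len₁ : b₁ - a₁ = d / 2 - 1
  len₂ : b₂ - a₂ = d / 2 - 1
  bot₁ : a₁ ≤ botB X₁
  bot₂ : a₂ ≤ botB X₂
  top₁ : topB X₁ ≤ b₁
  top₂ : topB X₂ ≤ b₂
  cong : d ∣ b₂ - (b₁ + d / 2)

/-- The symbol `Θ = (X₁, X₂)` is `d`-small: it admits some pair of defining intervals. -/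
def IsDSmall (d : ℤ) (X₁ X₂ : Set ℤ) : Prop :=
  ∃ a₁ b₁ a₂ b₂ : ℤ, IsDSmallWith d X₁ X₂ a₁ b₁ a₂ b₂

/-- The row (`1` or `2`) containing the right region. -/
def rightRow (b₁ b₂ : ℤ) : ℕ := if b₁ < b₂ then 2 else 1

/-- The row, as a β-set, containing the right region. -/
def rightSet (X₁ X₂ : Set ℤ) (b₁ b₂ : ℤ) : Set ℤ := if b₁ < b₂ then X₂ else X₁

/-- The row, as a β-set, containing the left region. -/
def leftSet (X₁ X₂ : Set ℤ) (b₁ b₂ : ℤ) : Set ℤ := if b₁ < b₂ then X₁ else X₂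

/-- The cardinality `kd` of the middle region. -/
def middleLen (d b₁ b₂ : ℤ) : ℤ := |b₂ - b₁| - d / 2

/-- The alphabet `{∧, ∨, ×, ∘}` of up-down diagrams: `up = ∧`, `dn = ∨`,
`cross = ×`, `circ = ∘`. -/
inductive UD : Type
  | up
  | dn
  | cross
  | circ
deriving DecidableEq

/-- The up-down diagram `w_ud(Θ)` of a `d`-small symbol with defining intervals:
`wud d X₁ X₂ b₁ b₂ i` is the letter `w_i` for `1 ≤ i ≤ d/2`.  Here the right
region is `[m+1, m+d/2]` with `m = max b₁ b₂ - d/2`, `β_i = m + i`, and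
`β_i - kd - d/2 = β_i - |b₂ - b₁|`. -/
noncomputable def wud (d : ℤ) (X₁ X₂ : Set ℤ) (b₁ b₂ : ℤ) (i : ℤ) : UD :=
  if (max b₁ b₂ - d / 2 + i) ∈ rightSet X₁ X₂ b₁ b₂ then
    if (max b₁ b₂ - d / 2 + i) - |b₂ - b₁| ∈ leftSet X₁ X₂ b₁ b₂ then UD.cross else UD.up
  else
    if (max b₁ b₂ - d / 2 + i) - |b₂ - b₁| ∈ leftSet X₁ X₂ b₁ b₂ then UD.dn else UD.circ

/-- Removing an `e`-cohook in row `1` (the rows get interchanged afterwards). -/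
def RemoveCohookRow1 (e : ℤ) (Θ Θ' : Set ℤ × Set ℤ) : Prop :=
  ∃ x : ℤ, x ∈ Θ.1 ∧ x - e ∉ Θ.2 ∧ Θ' = (Θ.2 ∪ {x - e}, Θ.1 \ {x})

/-- Removing an `e`-cohook in row `2` (the rows get interchanged afterwards). -/
def RemoveCohookRow2 (e : ℤ) (Θ Θ' : Set ℤ × Set ℤ) : Prop :=
  ∃ x : ℤ, x ∈ Θ.2 ∧ x - e ∉ Θ.1 ∧ Θ' = (Θ.2 \ {x}, Θ.1 ∪ {x - e})

/-- Removing an `e`-cohook. -/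
def RemoveCohook (e : ℤ) (Θ Θ' : Set ℤ × Set ℤ) : Prop :=
  RemoveCohookRow1 e Θ Θ' ∨ RemoveCohookRow2 e Θ Θ'

/-- The symbol `Θ` has an `e`-cohook. -/
def HasCohook (e : ℤ) (Θ : Set ℤ × Set ℤ) : Prop :=
  (∃ x : ℤ, x ∈ Θ.1 ∧ x - e ∉ Θ.2) ∨ (∃ x : ℤ, x ∈ Θ.2 ∧ x - e ∉ Θ.1)

/-- `C` is an `e`-cocore of `Θ`: a symbol with no `e`-cohooks obtained from `Θ`
by a finite sequence of `e`-cohook removals. -/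
def IsCocoreOf (e : ℤ) (Θ C : Set ℤ × Set ℤ) : Prop :=
  Relation.ReflTransGen (RemoveCohook e) Θ C ∧ ¬ HasCohook e C

/-- The `n`-fold composition of a relation. -/
def RelPow {α : Type*} (R : α → α → Prop) : ℕ → α → α → Prop
  | 0 => Eq
  | n + 1 => fun a c => ∃ b, R a b ∧ RelPow R n b c

/-- `(a, b)` (row `a`, column `b`, both `1`-indexed) is a box of the partition `μ`
(`μ` is `0`-indexed, so `μ (a-1)` is the `a`-th part `λ_a`). -/
def IsBox (μ : ℕ → ℕ) (a b : ℕ) : Prop := 1 ≤ a ∧ 1 ≤ b ∧ b ≤ μ (a - 1)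

/-- `(a, b)` is an addable box of `μ`: adjoining it yields a partition. -/
def IsAddableBox (μ : ℕ → ℕ) (a b : ℕ) : Prop :=
  1 ≤ a ∧ b = μ (a - 1) + 1 ∧ (a = 1 ∨ b ≤ μ (a - 2))

/-- `(a, b)` is a removable box of `μ`: deleting it yields a partition. -/
def IsRemovableBox (μ : ℕ → ℕ) (a b : ℕ) : Prop :=
  1 ≤ a ∧ b = μ (a - 1) ∧ 1 ≤ b ∧ μ a < b

/-- The charged content `t + b - a` of the box in row `a` and column `b`,
with respect to the charge `t`. -/
def chCont (t : ℤ) (a b : ℕ) : ℤ := t + (b : ℤ) - (a : ℤ)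

/-- Selecting the component `j ∈ {1, 2}` of a bipartition. -/
def compPart (μ₁ μ₂ : ℕ → ℕ) (j : ℕ) : ℕ → ℕ := if j = 1 then μ₁ else μ₂

/-- Selecting the component `j ∈ {1, 2}` of a pair of charges. -/
def compT (t₁ t₂ : ℤ) (j : ℕ) : ℤ := if j = 1 then t₁ else t₂

/-- The box `(a, b)` in component `j` is a good removable `i`-box of the
bipartition `(μ₁, μ₂)` with charges `(t₁, t₂)`, where `r` is the row containing
the right region: it is a removable box of charged content `≡ i (mod d)` and
there is no addable box `A` of either component with charged content `≡ i (mod d)`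
such that either `A` has strictly larger charged content, or `A` has equal
charged content and lies in component `r`. -/
def IsGoodRemovableBox (d : ℤ) (μ₁ μ₂ : ℕ → ℕ) (t₁ t₂ : ℤ) (r : ℕ) (i : ℤ)
    (j a b : ℕ) : Prop :=
  (j = 1 ∨ j = 2) ∧ IsRemovableBox (compPart μ₁ μ₂ j) a b ∧
    d ∣ chCont (compT t₁ t₂ j) a b - i ∧
    ∀ j' a' b' : ℕ, (j' = 1 ∨ j' = 2) → IsAddableBox (compPart μ₁ μ₂ j') a' b' →
      d ∣ chCont (compT t₁ t₂ j') a' b' - i →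
      ¬ (chCont (compT t₁ t₂ j) a b < chCont (compT t₁ t₂ j') a' b' ∨
        (chCont (compT t₁ t₂ j') a' b' = chCont (compT t₁ t₂ j) a b ∧ j' = r))

/-- The position of a letter in the order `× < ∧ < ∨ < ∘`. -/
def udIdx : UD → ℕ
  | UD.cross => 0
  | UD.up => 1
  | UD.dn => 2
  | UD.circ => 3

/-- The word `w₁ ⋯ w_{d/2}` reads `×^α ∧^w ∨^h ∘^β`: all `×`'s first, then all
`∧`'s, then all `∨`'s, then all `∘`'s. -/
def SortedUD (d : ℤ) (w : ℤ → UD) : Prop :=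
  ∀ i j : ℤ, 1 ≤ i → i ≤ j → j ≤ d / 2 → udIdx (w i) ≤ udIdx (w j)

/-- The number of occurrences of the letter `u` in the word `w₁ ⋯ w_{d/2}`. -/
noncomputable def countUD (d : ℤ) (w : ℤ → UD) (u : UD) : ℕ :=
  ((Finset.Icc (1 : ℤ) (d / 2)).filter fun i => w i = u).card

/-- `w'` is obtained from `w` by permuting the letters `∧` and `∨` among the
positions carrying `∧` or `∨`, leaving every `×` and `∘` in place. -/
def PermUpDn (d : ℤ) (w w' : ℤ → UD) : Prop :=
  (∀ i : ℤ, 1 ≤ i → i ≤ d / 2 →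
    ((w' i = UD.cross ↔ w i = UD.cross) ∧ (w' i = UD.circ ↔ w i = UD.circ))) ∧
  countUD d w' UD.up = countUD d w UD.up

/-- Replace every letter `∧` by `∨`, leaving the other letters unchanged. -/
def replaceUp : UD → UD
  | UD.up => UD.dn
  | u => u

/-
Let `β_i` be the `i`-th bead position of the right region. Since `w_ud(Ψ)` has as many `∧`'s as
`w_ud(Θ)` and the same `×`'s and `∘`'s, but differs from it, some position `j` carries `∧` in
`Ψ` and `∨` in `Θ`. As `w_ud(Θ)` is sorted, every position `i ≥ j` of `Θ` carries `∨` or `∘`, so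
the right row of `Θ` has no bead `≥ β_j`; its left row lies below the left region, which ends at
least `d/2` before the right one, hence also below `β_j`. But `β_j` is a bead of `Ψ`.
-/

lemma IsBetaSet.bddAbove {X : Set ℤ} (h : IsBetaSet X) : BddAbove X := by
  obtain ⟨C, hC⟩ := h.2
  exact ⟨C, fun z hz => le_of_not_gt fun hlt => hC z hlt.le hz⟩

lemma IsBetaSet.nonempty {X : Set ℤ} (h : IsBetaSet X) : X.Nonempty := by
  obtain ⟨c, hc⟩ := h.1
  exact ⟨c - 1, hc _ (by omega)⟩

lemma UD.eq_of_iff {u v : UD} (hup : u = UD.up ↔ v = UD.up) (hcross : u = UD.cross ↔ v = UD.cross)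
    (hcirc : u = UD.circ ↔ v = UD.circ) : u = v := by
  cases u <;> cases v <;> simp_all

lemma PermUpDn.exists_up_dn {d : ℤ} {w w' : ℤ → UD} (h : PermUpDn d w w')
    (hne : ∃ i, 1 ≤ i ∧ i ≤ d / 2 ∧ w' i ≠ w i) :
    ∃ j, 1 ≤ j ∧ j ≤ d / 2 ∧ w' j = UD.up ∧ w j = UD.dn := by
  by_contra! hno
  obtain ⟨i, hi1, hid, hwi⟩ := hne
  have hsub : (Finset.Icc 1 (d / 2)).filter (fun i => w' i = UD.up) ⊆
      (Finset.Icc 1 (d / 2)).filter (fun i => w i = UD.up) := by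
    intro k hk
    simp only [Finset.mem_filter, Finset.mem_Icc] at hk ⊢
    obtain ⟨⟨hk1, hkd⟩, hup⟩ := hk
    refine ⟨⟨hk1, hkd⟩, ?_⟩
    have ⟨hcross, hcirc⟩ := h.1 k hk1 hkd
    cases hw : w k <;> simp_all
  have hups := Finset.eq_of_subset_of_card_le hsub h.2.ge
  have hup : w' i = UD.up ↔ w i = UD.up := by
    simpa [hi1, hid] using Finset.ext_iff.mp hups i
  exact hwi (UD.eq_of_iff hup (h.1 i hi1 hid).1 (h.1 i hi1 hid).2)

lemma SortedUD.dn_or_circ {d : ℤ} {w : ℤ → UD} (h : SortedUD d w) {i j : ℤ} (hj : 1 ≤ j)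
    (hji : j ≤ i) (hid : i ≤ d / 2) (hw : w j = UD.dn) : w i = UD.dn ∨ w i = UD.circ := by
  have := h j i hj hji hid
  rw [hw] at this
  cases hwi : w i <;> simp_all [udIdx]

lemma mem_rightSet_iff_wud {d : ℤ} {X₁ X₂ : Set ℤ} {b₁ b₂ : ℤ} (i : ℤ) :
    max b₁ b₂ - d / 2 + i ∈ rightSet X₁ X₂ b₁ b₂ ↔
      wud d X₁ X₂ b₁ b₂ i = UD.up ∨ wud d X₁ X₂ b₁ b₂ i = UD.cross := by
  unfold wud
  split_ifs <;> simp_all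

lemma SortedUD.notMem_rightSet {d : ℤ} {X₁ X₂ : Set ℤ} {b₁ b₂ : ℤ}
    (h : SortedUD d (wud d X₁ X₂ b₁ b₂)) {i j : ℤ} (hj : 1 ≤ j) (hji : j ≤ i) (hid : i ≤ d / 2)
    (hw : wud d X₁ X₂ b₁ b₂ j = UD.dn) : max b₁ b₂ - d / 2 + i ∉ rightSet X₁ X₂ b₁ b₂ := by
  rw [mem_rightSet_iff_wud]
  rcases h.dn_or_circ hj hji hid hw with hwi | hwi <;> simp [hwi]

lemma rightSet_union_leftSet (X₁ X₂ : Set ℤ) (b₁ b₂ : ℤ) :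
    rightSet X₁ X₂ b₁ b₂ ∪ leftSet X₁ X₂ b₁ b₂ = X₁ ∪ X₂ := by
  unfold rightSet leftSet
  split_ifs
  exacts [Set.union_comm _ _, rfl]

lemma half_le_abs_sub_of_dvd {d b₁ b₂ : ℤ} (h : d ∣ b₂ - (b₁ + d / 2)) : d / 2 ≤ |b₂ - b₁| := by
  obtain ⟨k, hk⟩ := h
  rcases le_or_gt d 0 with hd | hd
  · exact le_trans (by omega) (abs_nonneg _)
  rcases le_or_gt 0 k with hk0 | hk0
  · have : 0 ≤ d * k := mul_nonneg hd.le hk0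
    exact le_abs.2 (Or.inl (by omega))
  · have : d * k ≤ -d := by nlinarith
    exact le_abs.2 (Or.inr (by omega))

namespace IsDSmallWith

variable {d : ℤ} {X₁ X₂ : Set ℤ} {a₁ b₁ a₂ b₂ : ℤ}

lemma le_max_of_mem_rightSet (h : IsDSmallWith d X₁ X₂ a₁ b₁ a₂ b₂) (hX₁ : BddAbove X₁)
    (hX₂ : BddAbove X₂) {z : ℤ} (hz : z ∈ rightSet X₁ X₂ b₁ b₂) : z ≤ max b₁ b₂ := by
  unfold rightSet at hz
  split_ifs at hz
  · exact (le_csSup hX₂ hz).trans (h.top₂.trans (le_max_right _ _))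
  · exact (le_csSup hX₁ hz).trans (h.top₁.trans (le_max_left _ _))

lemma le_min_of_mem_leftSet (h : IsDSmallWith d X₁ X₂ a₁ b₁ a₂ b₂) (hX₁ : BddAbove X₁)
    (hX₂ : BddAbove X₂) {z : ℤ} (hz : z ∈ leftSet X₁ X₂ b₁ b₂) : z ≤ min b₁ b₂ := by
  unfold leftSet at hz
  split_ifs at hz with hb
  · exact (le_csSup hX₁ hz).trans (h.top₁.trans (le_min le_rfl hb.le))
  · exact (le_csSup hX₂ hz).trans (h.top₂.trans (le_min (not_lt.1 hb) le_rfl))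

end IsDSmallWith

theorem stmt14_general (d : ℤ)
    (X₁ X₂ Y₁ Y₂ : Set ℤ)
    (hX₁ : IsBetaSet X₁) (hX₂ : IsBetaSet X₂) (hY₁ : IsBetaSet Y₁) (hY₂ : IsBetaSet Y₂)
    (a₁ b₁ a₂ b₂ : ℤ)
    (hsmX : IsDSmallWith d X₁ X₂ a₁ b₁ a₂ b₂)
    (hsort : SortedUD d (wud d X₁ X₂ b₁ b₂))
    (hperm : PermUpDn d (wud d X₁ X₂ b₁ b₂) (wud d Y₁ Y₂ b₁ b₂))
    (hne : ∃ i : ℤ, 1 ≤ i ∧ i ≤ d / 2 ∧ wud d Y₁ Y₂ b₁ b₂ i ≠ wud d X₁ X₂ b₁ b₂ i) :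
    topB (X₁ ∪ X₂) < topB (Y₁ ∪ Y₂) := by
  obtain ⟨j, hj1, hjd, hYup, hXdn⟩ := hperm.exists_up_dn hne
  have hgap : max b₁ b₂ - min b₁ b₂ = |b₂ - b₁| := by rw [max_sub_min_eq_abs]
  have hhalf := half_le_abs_sub_of_dvd hsmX.cong
  have hX_lt : ∀ z ∈ X₁ ∪ X₂, z < max b₁ b₂ - d / 2 + j := by
    rw [← rightSet_union_leftSet]
    rintro z (hz | hz)
    · have hzmax := hsmX.le_max_of_mem_rightSet hX₁.bddAbove hX₂.bddAbove hz
      by_contra! hjz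
      obtain ⟨i, rfl⟩ : ∃ i, z = max b₁ b₂ - d / 2 + i := ⟨z - (max b₁ b₂ - d / 2), by ring⟩
      exact hsort.notMem_rightSet hj1 (by omega) (by omega) hXdn hz
    · have := hsmX.le_min_of_mem_leftSet hX₁.bddAbove hX₂.bddAbove hz
      omega
  have hY_mem : max b₁ b₂ - d / 2 + j ∈ Y₁ ∪ Y₂ := by
    rw [← rightSet_union_leftSet]
    exact Or.inl ((mem_rightSet_iff_wud j).2 (Or.inl hYup))
  calc topB (X₁ ∪ X₂) < max b₁ b₂ - d / 2 + j :=
        hX_lt _ (Int.csSup_mem (hX₁.nonempty.mono Set.subset_union_left)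
          (hX₁.bddAbove.union hX₂.bddAbove))
    _ ≤ topB (Y₁ ∪ Y₂) := le_csSup (hY₁.bddAbove.union hY₂.bddAbove) hY_mem

/-- Let `Θ = (X₁,X₂)` be a `d`-small symbol with defining intervals
whose up-down diagram reads `×^α ∧^w ∨^h ∘^β`, and let `Ψ = (Y₁,Y₂)` be a `d`-small
symbol with the same defining intervals whose up-down diagram differs from that of
`Θ` but is obtained from it by permuting the `∧`'s and `∨`'s, leaving every `×` and
`∘` in place. Then `max (Y₁ ∪ Y₂) > max (X₁ ∪ X₂)`. -/
theorem stmt14 (d : ℤ) (hd : 2 ≤ d) (hdE : Even d)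
    (X₁ X₂ Y₁ Y₂ : Set ℤ)
    (hX₁ : IsBetaSet X₁) (hX₂ : IsBetaSet X₂) (hY₁ : IsBetaSet Y₁) (hY₂ : IsBetaSet Y₂)
    (a₁ b₁ a₂ b₂ : ℤ)
    (hsmX : IsDSmallWith d X₁ X₂ a₁ b₁ a₂ b₂)
    (hsmY : IsDSmallWith d Y₁ Y₂ a₁ b₁ a₂ b₂)
    (hsort : SortedUD d (wud d X₁ X₂ b₁ b₂))
    (hperm : PermUpDn d (wud d X₁ X₂ b₁ b₂) (wud d Y₁ Y₂ b₁ b₂))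
    (hne : ∃ i : ℤ, 1 ≤ i ∧ i ≤ d / 2 ∧ wud d Y₁ Y₂ b₁ b₂ i ≠ wud d X₁ X₂ b₁ b₂ i) :
    topB (X₁ ∪ X₂) < topB (Y₁ ∪ Y₂) :=
  stmt14_general d X₁ X₂ Y₁ Y₂ hX₁ hX₂ hY₁ hY₂ a₁ b₁ a₂ b₂ hsmX hsort hperm hne
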